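/- Let m ≥ 1, let S ⊆ ℤ be periodic with period m, p = |S ∩ [0,m−1]|, and let L' ≤ U' be integers with U' − L' ≤ m − 1 and r' = |S ∩ [L', U'−1]|. Then for all integers L ≡ L' (mod m) and U ≡ U' (mod m) with L ≤ U: m·|S ∩ [L, U−1]| = p·((U − L) − (U' − L')) + m·r'. -/

import Mathlib

/-!
Counting points of an `m`-periodic set is translation invariant along multiples of `m`, so every
window of length `m` holds as many points as `[0, m)`. Since `L ≡ L'` and `U ≡ U'`, the interval
`[L, U)` splits as `k` consecutive windows of length `m` followed by a translate of `[L', U')`,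
where `k * m = (U - L) - (U' - L')`; the bound `U' - L' < m` forces `k ≥ 0`.
-/

open Set Function

section Translation

variable {α : Type*} {S : Set α}

theorem ncard_inter_Ico_add_of_periodic [AddCommGroup α] [LinearOrder α] [IsOrderedAddMonoid α]
    {c : α} (h : Periodic (· ∈ S) c) (a b : α) :
    (S ∩ Ico (a + c) (b + c)).ncard = (S ∩ Ico a b).ncard := by
  have hS : (· + c) '' S = S := by
    ext x
    rw [image_add_right, mem_preimage]
    exact Iff.of_eq (h.neg x)
  rw [← ncard_image_of_injective (S ∩ Ico a b) (add_left_injective c),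
    image_inter (add_left_injective c), hS, image_add_const_Ico]

theorem ncard_inter_Ico_add_ncard_inter_Ico [LinearOrder α] [LocallyFiniteOrder α] {a b c : α}
    (hab : a ≤ b) (hbc : b ≤ c) :
    (S ∩ Ico a b).ncard + (S ∩ Ico b c).ncard = (S ∩ Ico a c).ncard := by
  rw [← Ico_union_Ico_eq_Ico hab hbc, inter_union_distrib_left]
  refine (ncard_union_eq ?_ ((finite_Ico a b).inter_of_right S)
    ((finite_Ico b c).inter_of_right S)).symm
  exact Ico_disjoint_Ico_same.mono inter_subset_right inter_subset_right

end Translation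

section Periodic

variable {S : Set ℤ} {m : ℤ}

/-- Reducing `a` modulo `m`, the window `[a, a + m)` is a translate of `[r, m) ∪ [m, m + r)`
with `0 ≤ r < m`, and `[m, m + r)` is in turn a translate of `[0, r)`. -/
theorem ncard_inter_Ico_add_period (h : Periodic (· ∈ S) m) (hm : 0 < m) (a : ℤ) :
    (S ∩ Ico a (a + m)).ncard = (S ∩ Ico 0 m).ncard := by
  set r := a % m
  have hr₀ : 0 ≤ r := Int.emod_nonneg a hm.ne'
  have hrm : r < m := Int.emod_lt_of_pos a hm
  have ha : a = r + a / m * m := (Int.emod_add_ediv_mul a m).symm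
  calc (S ∩ Ico a (a + m)).ncard
      = (S ∩ Ico r (r + m)).ncard := by
        rw [ha, add_right_comm, ncard_inter_Ico_add_of_periodic (by simpa using h.int_mul _)]
    _ = (S ∩ Ico r m).ncard + (S ∩ Ico (0 + m) (r + m)).ncard := by
        rw [zero_add, ncard_inter_Ico_add_ncard_inter_Ico hrm.le (by omega)]
    _ = (S ∩ Ico 0 m).ncard := by
        rw [ncard_inter_Ico_add_of_periodic h, add_comm,
          ncard_inter_Ico_add_ncard_inter_Ico hr₀ hrm.le]

theorem ncard_inter_Ico_add_nat_mul_period (h : Periodic (· ∈ S) m) (hm : 0 < m) (a : ℤ)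
    (k : ℕ) : (S ∩ Ico a (a + k * m)).ncard = k * (S ∩ Ico 0 m).ncard := by
  induction k with
  | zero => simp
  | succ k ih =>
    have hsplit := ncard_inter_Ico_add_ncard_inter_Ico (S := S) (a := a) (b := a + k * m)
      (c := a + k * m + m) (by nlinarith) (by omega)
    rw [ih, ncard_inter_Ico_add_period h hm] at hsplit
    rw [Nat.cast_succ, add_one_mul, ← add_assoc, ← hsplit, Nat.succ_mul]

theorem ncard_inter_Ico_eq_of_modEq (h : Periodic (· ∈ S) m) {a b a' b' : ℤ}
    (ha : a ≡ a' [ZMOD m]) (hlen : b - a = b' - a') :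
    (S ∩ Ico a b).ncard = (S ∩ Ico a' b').ncard := by
  obtain ⟨t, ht⟩ := ha.symm.dvd
  rw [show a = a' + t * m by linarith, show b = b' + t * m by linarith,
    ncard_inter_Ico_add_of_periodic (by simpa using h.int_mul t)]

end Periodic

/-- the exact affine count formula for a periodic set over an interval
with prescribed endpoint residues. -/
theorem stmt_13 (S : Set ℤ) (m : ℤ) (hm : 1 ≤ m) (hper : ∀ n : ℤ, n ∈ S ↔ n + m ∈ S)
    (L' U' : ℤ) (hL'U' : L' ≤ U') (hlen : U' - L' ≤ m - 1)
    (L U : ℤ) (hL : L ≡ L' [ZMOD m]) (hU : U ≡ U' [ZMOD m]) (hLU : L ≤ U) :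
    m * ((S ∩ Set.Ico L U).ncard : ℤ)
      = ((S ∩ Set.Ico 0 m).ncard : ℤ) * ((U - L) - (U' - L'))
        + m * ((S ∩ Set.Ico L' U').ncard : ℤ) := by
  have hS : Periodic (· ∈ S) m := fun n => propext (hper n).symm
  obtain ⟨k, hk⟩ := (hU.sub hL).symm.dvd
  have hk₀ : 0 ≤ k := by nlinarith
  lift k to ℕ using hk₀
  have hwindows := ncard_inter_Ico_add_nat_mul_period hS (by omega) L k
  have htail : (S ∩ Ico (L + k * m) U).ncard = (S ∩ Ico L' U').ncard :=
    ncard_inter_Ico_eq_of_modEq hS ((Int.add_mul_emod_self_right L k m).trans hL) (by linarith)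
  rw [← ncard_inter_Ico_add_ncard_inter_Ico (b := L + k * m) (by nlinarith) (by nlinarith),
    hwindows, htail, hk]
  push_cast
  ring
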